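/- arXiv:1704.01319 — 2 statements merged into one kernel-verified Lean document; each statement's English description precedes it below -/
import Mathlib

section
/- For all homogeneous elements a, b of R, one has {a, b} = Σ_{α in Λ} ψ_α(a) {x_α, b} in R (the sum having only finitely many nonzero terms). -/
noncomputable section

open scoped DirectSum

/-- The sign `(-1)^m`, as an integer, for `m : ℤ`. -/
def sgn (m : ℤ) : ℤ := (Int.negOnePow m : ℤ)

/-- A differential graded Poisson algebra structure on a `ℤ`-graded `k`-algebra `A`,
whose grading is given by `𝒜`. -/
structure DGPoissonAlgebra (k : Type) [Field k] (A : Type) [Ring A] [Algebra k A]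
    (𝒜 : ℤ → Submodule k A) : Type where
  /-- the Poisson bracket -/
  br : A →ₗ[k] A →ₗ[k] A
  /-- the differential -/
  d : A →ₗ[k] A
  br_mem : ∀ ⦃i j : ℤ⦄ ⦃a b : A⦄, a ∈ 𝒜 i → b ∈ 𝒜 j → br a b ∈ 𝒜 (i + j)
  d_mem : ∀ ⦃i : ℤ⦄ ⦃a : A⦄, a ∈ 𝒜 i → d a ∈ 𝒜 (i + 1)
  antisymm : ∀ ⦃i j : ℤ⦄ ⦃a b : A⦄, a ∈ 𝒜 i → b ∈ 𝒜 j →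
    br a b = -(sgn (i * j) • br b a)
  jacobi : ∀ ⦃i j l : ℤ⦄ ⦃a b c : A⦄, a ∈ 𝒜 i → b ∈ 𝒜 j → c ∈ 𝒜 l →
    br a (br b c) = br (br a b) c + sgn (i * j) • br b (br a c)
  gcomm : ∀ ⦃i j : ℤ⦄ ⦃a b : A⦄, a ∈ 𝒜 i → b ∈ 𝒜 j → a * b = sgn (i * j) • (b * a)
  leibniz : ∀ ⦃i j l : ℤ⦄ ⦃a b c : A⦄, a ∈ 𝒜 i → b ∈ 𝒜 j → c ∈ 𝒜 l →
    br a (b * c) = br a b * c + sgn (i * j) • (b * br a c)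
  d_sq : ∀ a : A, d (d a) = 0
  d_br : ∀ ⦃i j : ℤ⦄ ⦃a b : A⦄, a ∈ 𝒜 i → b ∈ 𝒜 j →
    d (br a b) = br (d a) b + sgn i • br a (d b)
  d_mul : ∀ ⦃i j : ℤ⦄ ⦃a b : A⦄, a ∈ 𝒜 i → b ∈ 𝒜 j →
    d (a * b) = d a * b + sgn i • (a * d b)

/-- A differential graded algebra structure (i.e. a differential) on a `ℤ`-graded
`k`-algebra `B` with grading `ℬ`. -/
structure DGAlgebra (k : Type) [Field k] (B : Type) [Ring B] [Algebra k B]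
    (ℬ : ℤ → Submodule k B) : Type where
  /-- the differential -/
  d : B →ₗ[k] B
  d_mem : ∀ ⦃i : ℤ⦄ ⦃b : B⦄, b ∈ ℬ i → d b ∈ ℬ (i + 1)
  d_sq : ∀ b : B, d (d b) = 0
  d_mul : ∀ ⦃i j : ℤ⦄ ⦃a b : B⦄, a ∈ ℬ i → b ∈ ℬ j →
    d (a * b) = d a * b + sgn i • (a * d b)

/-- `f` is a DG algebra map: a degree-`0` algebra map commuting with the differentials. -/
structure IsDGAlgebraMap (k : Type) [Field k] {A B : Type} [Ring A] [Algebra k A]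
    [Ring B] [Algebra k B] (𝒜 : ℤ → Submodule k A) (ℬ : ℤ → Submodule k B)
    (dA : A →ₗ[k] A) (dB : B →ₗ[k] B) (f : A →ₐ[k] B) : Prop where
  map_mem : ∀ ⦃i : ℤ⦄ ⦃a : A⦄, a ∈ 𝒜 i → f a ∈ ℬ i
  map_d : ∀ a : A, f (dA a) = dB (f a)

/-- The compatibility conditions satisfied by a pair `(f, g)` from a DG Poisson algebra
`A` to a DG algebra `B`: `f` is a DG algebra map, `g` is a degree-`0` `k`-linear map
commuting with the differentials which is a graded Lie algebra map into `B` with the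
graded commutator, and the two mixed identities hold. -/
def UEACompat (k : Type) [Field k] {A B : Type} [Ring A] [Algebra k A]
    [Ring B] [Algebra k B] (𝒜 : ℤ → Submodule k A) (ℬ : ℤ → Submodule k B)
    (P : DGPoissonAlgebra k A 𝒜) (dB : B →ₗ[k] B)
    (f : A →ₐ[k] B) (g : A →ₗ[k] B) : Prop :=
  IsDGAlgebraMap k 𝒜 ℬ P.d dB f ∧
  (∀ ⦃i : ℤ⦄ ⦃a : A⦄, a ∈ 𝒜 i → g a ∈ ℬ i) ∧
  (∀ a : A, g (P.d a) = dB (g a)) ∧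
  (∀ ⦃i j : ℤ⦄ ⦃a b : A⦄, a ∈ 𝒜 i → b ∈ 𝒜 j →
    g (P.br a b) = g a * g b - sgn (i * j) • (g b * g a)) ∧
  (∀ ⦃i j : ℤ⦄ ⦃a b : A⦄, a ∈ 𝒜 i → b ∈ 𝒜 j →
    f (P.br a b) = g a * f b - sgn (i * j) • (f b * g a)) ∧
  (∀ ⦃i j : ℤ⦄ ⦃a b : A⦄, a ∈ 𝒜 i → b ∈ 𝒜 j →
    g (a * b) = f a * g b + sgn (i * j) • (f b * g a))

/-- `(E, α, β)` is a universal enveloping algebra of the DG Poisson algebra `A`. -/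
def IsUEA (k : Type) [Field k] {A E : Type} [Ring A] [Algebra k A] [Ring E] [Algebra k E]
    (𝒜 : ℤ → Submodule k A) (ℰ : ℤ → Submodule k E)
    (P : DGPoissonAlgebra k A 𝒜) (DE : DGAlgebra k E ℰ)
    (α : A →ₐ[k] E) (β : A →ₗ[k] E) : Prop :=
  UEACompat k 𝒜 ℰ P DE.d α β ∧
  ∀ (D : Type) [Ring D] [Algebra k D] (𝒟 : ℤ → Submodule k D) [GradedAlgebra 𝒟]
    (dD : DGAlgebra k D 𝒟) (f : A →ₐ[k] D) (g : A →ₗ[k] D),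
    UEACompat k 𝒜 𝒟 P dD.d f g →
    ∃! φ : E →ₐ[k] D, IsDGAlgebraMap k ℰ 𝒟 DE.d dD.d φ ∧
      φ.comp α = f ∧ φ.toLinearMap.comp β = g

/-- The two-sided ideal of `F` generated by a set `S`, as a `k`-submodule. -/
def idealGen (k : Type) [Field k] {F : Type} [Ring F] [Algebra k F] (S : Set F) :
    Submodule k F :=
  Submodule.span k {z : F | ∃ u v : F, ∃ s ∈ S, z = u * s * v}

/-- The left ideal of `F` generated by a set `S`, as a `k`-submodule. -/
def leftIdealGen (k : Type) [Field k] {F : Type} [Ring F] [Algebra k F] (S : Set F) :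
    Submodule k F :=
  Submodule.span k {z : F | ∃ u : F, ∃ s ∈ S, z = u * s}

/-- A submodule is graded if it is spanned by its homogeneous elements. -/
def IsGradedSubmodule (k : Type) [Field k] {A : Type} [AddCommGroup A] [Module k A]
    (𝒜 : ℤ → Submodule k A) (M : Submodule k A) : Prop :=
  M ≤ Submodule.span k {a : A | a ∈ M ∧ ∃ i, a ∈ 𝒜 i}

/-- A `k`-submodule which is a two-sided ideal. -/
def IsTwoSidedIdealSub (k : Type) [Field k] {A : Type} [Ring A] [Algebra k A]
    (M : Submodule k A) : Prop :=
  ∀ r : A, ∀ m ∈ M, r * m ∈ M ∧ m * r ∈ M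

/-- A DG ideal: a graded two-sided ideal closed under the differential `d`. -/
def IsDGIdeal (k : Type) [Field k] {A : Type} [Ring A] [Algebra k A]
    (𝒜 : ℤ → Submodule k A) (d : A →ₗ[k] A) (M : Submodule k A) : Prop :=
  IsTwoSidedIdealSub k M ∧ IsGradedSubmodule k 𝒜 M ∧ ∀ m ∈ M, d m ∈ M

/-- A DG Poisson ideal: a DG ideal which is also closed under the Poisson bracket. -/
def IsDGPoissonIdeal (k : Type) [Field k] {A : Type} [Ring A] [Algebra k A]
    (𝒜 : ℤ → Submodule k A) (P : DGPoissonAlgebra k A 𝒜) (M : Submodule k A) : Prop :=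
  IsDGIdeal k 𝒜 P.d M ∧ ∀ a : A, ∀ m ∈ M, P.br a m ∈ M

/-- `π : A → B` presents `B` as the quotient of `A` by `I`. -/
structure IsQuotientBy (k : Type) [Field k] {A B : Type} [Ring A] [Algebra k A]
    [Ring B] [Algebra k B] (π : A →ₐ[k] B) (I : Submodule k A) : Prop where
  surj : Function.Surjective π
  ker : ∀ a : A, π a = 0 ↔ a ∈ I

/-- The (noncommutative, ordered) monomial `x 0 ^ e 0 * x 1 ^ e 1 * ⋯` . -/
def xMono {n : ℕ} {R : Type} [Ring R] (x : Fin n → R) (e : Fin n → ℕ) : R :=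
  ((List.finRange n).map fun r => x r ^ e r).prod

/-!
Fix a homogeneous `b`. Both `c ↦ {c, b}` and `c ↦ ∑_α ψ_α(c) {x_α, b}` are `k`-linear and obey
the product rule `D(zv) = z D(v) + (-1)^{|z||v|} v D(z)` of the anti-differentials `ψ_α`: for the
bracket this is the Leibniz rule moved to the first slot by antisymmetry and graded
commutativity. Two such maps agreeing on the generators `x_α` agree on every monomial, hence
on all of `R`.
-/

lemma sgn_zero : sgn 0 = 1 := rfl

lemma sgn_mul_sgn (m n : ℤ) : sgn m * sgn n = sgn (m + n) := by
  simp [sgn, Int.negOnePow_add]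

lemma sgn_add_two_mul (n t : ℤ) : sgn (n + 2 * t) = sgn n := by
  simp [sgn, Int.negOnePow_add, Int.negOnePow_two_mul]

section

variable {k R : Type} [Field k] [Ring R] [Algebra k R] {𝒜 : ℤ → Submodule k R}

def IsAntiDerivation (𝒜 : ℤ → Submodule k R) (D : R →ₗ[k] R) : Prop :=
  ∀ ⦃i j : ℤ⦄ ⦃a b : R⦄, a ∈ 𝒜 i → b ∈ 𝒜 j → D (a * b) = a * D b + sgn (i * j) • (b * D a)

lemma IsAntiDerivation.map_one [SetLike.GradedOne 𝒜] {D : R →ₗ[k] R}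
    (hD : IsAntiDerivation 𝒜 D) : D 1 = 0 := by
  have h := hD (SetLike.one_mem_graded 𝒜) (SetLike.one_mem_graded 𝒜)
  simpa [sgn_zero] using h

lemma IsAntiDerivation.eqOn_closure [SetLike.GradedMonoid 𝒜] {D₁ D₂ : R →ₗ[k] R}
    (hD₁ : IsAntiDerivation 𝒜 D₁) (hD₂ : IsAntiDerivation 𝒜 D₂) {s : Set R}
    (hs : ∀ a ∈ s, SetLike.IsHomogeneousElem 𝒜 a) (heq : Set.EqOn D₁ D₂ s) :
    Set.EqOn D₁ D₂ (Submonoid.closure s) := by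
  have hom : Submonoid.closure s ≤ SetLike.homogeneousSubmonoid 𝒜 :=
    Submonoid.closure_le.mpr hs
  intro c hc
  induction hc using Submonoid.closure_induction with
  | mem a ha => exact heq ha
  | one => rw [hD₁.map_one, hD₂.map_one]
  | mul z v hz hv ihz ihv =>
    obtain ⟨p, hzp⟩ := hom hz
    obtain ⟨q, hvq⟩ := hom hv
    rw [hD₁ hzp hvq, hD₂ hzp hvq, ihz, ihv]

lemma IsAntiDerivation.ext_of_adjoin_eq_top [SetLike.GradedMonoid 𝒜] {D₁ D₂ : R →ₗ[k] R}
    (hD₁ : IsAntiDerivation 𝒜 D₁) (hD₂ : IsAntiDerivation 𝒜 D₂) {s : Set R}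
    (hs : ∀ a ∈ s, SetLike.IsHomogeneousElem 𝒜 a) (hgen : Algebra.adjoin k s = ⊤)
    (heq : Set.EqOn D₁ D₂ s) : D₁ = D₂ := by
  refine LinearMap.ext_on (s := Submonoid.closure s) ?_ (hD₁.eqOn_closure hD₂ hs heq)
  rw [← Algebra.adjoin_eq_span, hgen, Algebra.top_toSubmodule]

lemma Set.Finite.support_of_eq_zero {Λ M N : Type} [Zero M] [Zero N] {f : Λ → M} {g : Λ → N}
    (hf : (Function.support f).Finite) (h : ∀ α, f α = 0 → g α = 0) :
    (Function.support g).Finite :=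
  hf.subset fun α hα hfα => hα (h α hfα)

def finsumMulRight {Λ : Type} (ψ : Λ → R →ₗ[k] R)
    (hψfin : ∀ a : R, (Function.support fun α => ψ α a).Finite) (y : Λ → R) : R →ₗ[k] R where
  toFun c := ∑ᶠ α, ψ α c * y α
  map_add' c c' := by
    simp only [map_add, add_mul]
    exact finsum_add_distrib ((hψfin c).support_of_eq_zero fun _ h => by simp [h])
      ((hψfin c').support_of_eq_zero fun _ h => by simp [h])
  map_smul' r c := by
    simp only [map_smul, smul_mul_assoc, RingHom.id_apply]
    exact (smul_finsum' r ((hψfin c).support_of_eq_zero fun _ h => by simp [h])).symm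

lemma isAntiDerivation_finsumMulRight {Λ : Type} {ψ : Λ → R →ₗ[k] R}
    (hψ : ∀ α, IsAntiDerivation 𝒜 (ψ α))
    (hψfin : ∀ a : R, (Function.support fun α => ψ α a).Finite) (y : Λ → R) :
    IsAntiDerivation 𝒜 (finsumMulRight ψ hψfin y) := by
  intro i j a b ha hb
  have hfin : ∀ c, (Function.support fun α => ψ α c * y α).Finite := fun c =>
    (hψfin c).support_of_eq_zero fun _ h => by simp [h]
  simp only [finsumMulRight, LinearMap.coe_mk, AddHom.coe_mk, hψ _ ha hb, add_mul,
    smul_mul_assoc, mul_assoc]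
  rw [mul_finsum' _ _ (hfin b), mul_finsum' _ _ (hfin a), smul_finsum' _
    ((hfin a).support_of_eq_zero fun _ h => by simp [h]),
    finsum_add_distrib ((hfin b).support_of_eq_zero fun _ h => by simp [h])
      ((hfin a).support_of_eq_zero fun _ h => by simp [h])]

end

namespace DGPoissonAlgebra

variable {k R : Type} [Field k] [Ring R] [Algebra k R] {𝒜 : ℤ → Submodule k R}

lemma br_mul_left [SetLike.GradedMonoid 𝒜] (P : DGPoissonAlgebra k R 𝒜) {p q j : ℤ}
    {z v b : R} (hz : z ∈ 𝒜 p) (hv : v ∈ 𝒜 q) (hb : b ∈ 𝒜 j) :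
    P.br (z * v) b = z * P.br v b + sgn (p * q) • (v * P.br z b) := by
  rw [P.antisymm (SetLike.mul_mem_graded hz hv) hb, P.leibniz hb hz hv, P.antisymm hb hz,
    P.antisymm hb hv]
  simp only [neg_mul, mul_neg, smul_neg, smul_add, smul_smul, smul_mul_assoc, mul_smul_comm,
    neg_neg, neg_add_rev, sgn_mul_sgn]
  rw [P.gcomm (P.br_mem hz hb) hv, smul_smul, sgn_mul_sgn]
  have hsgn₁ : sgn ((p + q) * j + (j * p + j * q)) = 1 := by
    rw [show (p + q) * j + (j * p + j * q) = 0 + 2 * (p * j + q * j) by ring, sgn_add_two_mul,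
      sgn_zero]
  have hsgn₂ : sgn ((p + q) * j + j * p + (p + j) * q) = sgn (p * q) := by
    rw [show (p + q) * j + j * p + (p + j) * q = p * q + 2 * (p * j + q * j) by ring,
      sgn_add_two_mul]
  rw [hsgn₁, hsgn₂, one_smul]

lemma isAntiDerivation_br_flip [SetLike.GradedMonoid 𝒜] (P : DGPoissonAlgebra k R 𝒜)
    {j : ℤ} {b : R} (hb : b ∈ 𝒜 j) : IsAntiDerivation 𝒜 (P.br.flip b) :=
  fun _ _ _ _ hz hv => P.br_mul_left hz hv hb

end DGPoissonAlgebra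

theorem stmt2_general (k R : Type) [Field k] [Ring R] [Algebra k R] (Λ : Type)
    (𝒜 : ℤ → Submodule k R) [GradedAlgebra 𝒜]
    (P : DGPoissonAlgebra k R 𝒜)
    (x : Λ → R) (w : Λ → ℤ) (hx : ∀ α, x α ∈ 𝒜 (w α))
    (hgen : Algebra.adjoin k (Set.range x) = ⊤)
    (ψ : Λ → R →ₗ[k] R)
    (hψx : ∀ α, ψ α (x α) = 1) (hψx' : ∀ α β, α ≠ β → ψ α (x β) = 0)
    (hψmul : ∀ (α : Λ) ⦃i j : ℤ⦄ ⦃a b : R⦄, a ∈ 𝒜 i → b ∈ 𝒜 j →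
      ψ α (a * b) = a * ψ α b + sgn (i * j) • (b * ψ α a))
    (hψfin : ∀ a : R, (Function.support fun α => ψ α a).Finite) :
    ∀ ⦃i j : ℤ⦄ ⦃a b : R⦄, a ∈ 𝒜 i → b ∈ 𝒜 j →
      P.br a b = ∑ᶠ α : Λ, ψ α a * P.br (x α) b := by
  intro i j a b _ hb
  have hψ : ∀ α, IsAntiDerivation 𝒜 (ψ α) := hψmul
  have hgenerators : Set.EqOn (P.br.flip b)
      (finsumMulRight ψ hψfin fun α => P.br (x α) b) (Set.range x) := by
    rintro _ ⟨β, rfl⟩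
    change P.br (x β) b = ∑ᶠ α, ψ α (x β) * P.br (x α) b
    rw [finsum_eq_single _ β (fun α hαβ => by rw [hψx' α β hαβ, zero_mul]), hψx, one_mul]
  have hext := (P.isAntiDerivation_br_flip hb).ext_of_adjoin_eq_top
    (isAntiDerivation_finsumMulRight hψ hψfin _) (by rintro _ ⟨α, rfl⟩; exact ⟨w α, hx α⟩)
    hgen hgenerators
  exact LinearMap.congr_fun hext a

/-- In the free graded-commutative DG Poisson algebra `R` on
homogeneous generators `x α`, for all homogeneous `a, b ∈ R` one has
`{a, b} = ∑_α ψ_α(a) * {x_α, b}`. -/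
theorem stmt2 (k R : Type) [Field k] [Ring R] [Algebra k R] (Λ : Type)
    (𝒜 : ℤ → Submodule k R) [GradedAlgebra 𝒜]
    (P : DGPoissonAlgebra k R 𝒜)
    (x : Λ → R) (w : Λ → ℤ) (hx : ∀ α, x α ∈ 𝒜 (w α))
    (hgen : Algebra.adjoin k (Set.range x) = ⊤)
    (ψ : Λ → R →ₗ[k] R)
    (hψx : ∀ α, ψ α (x α) = 1) (hψx' : ∀ α β, α ≠ β → ψ α (x β) = 0)
    (hψmem : ∀ (α : Λ) ⦃i : ℤ⦄ ⦃a : R⦄, a ∈ 𝒜 i → ψ α a ∈ 𝒜 (i - w α))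
    (hψmul : ∀ (α : Λ) ⦃i j : ℤ⦄ ⦃a b : R⦄, a ∈ 𝒜 i → b ∈ 𝒜 j →
      ψ α (a * b) = a * ψ α b + sgn (i * j) • (b * ψ α a))
    (hψfin : ∀ a : R, (Function.support fun α => ψ α a).Finite) :
    ∀ ⦃i j : ℤ⦄ ⦃a b : R⦄, a ∈ 𝒜 i → b ∈ 𝒜 j →
      P.br a b = ∑ᶠ α : Λ, ψ α a * P.br (x α) b :=
  stmt2_general k R Λ 𝒜 P x w hx hgen ψ hψx hψx' hψmul hψfin
end
end

section
/- In R^e, writing y_i = h_R(x_i) and x_i for m_R(x_i), one has for every i and every n ≥ 1: h_R(x_i^n) = (k + k(-1)^{(2k-1)|x_i|^2}) y_i x_i^{2k-1} if n = 2k, and h_R(x_i^n) = (k + 1 + k(-1)^{(2k-1)|x_i|^2}) y_i x_i^{2k} if n = 2k+1, where the integer coefficients act through the unit of k. -/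
noncomputable section

open scoped DirectSum

/-!
Write `u = m_R(x)`, `y = h_R(x)`, `e = m_R({x, x})` and `ε = (-1)^{|x|²}`. The defining identities
of the enveloping algebra give `u y = ε y u + e`, `u e = e u`, `(1 + ε) e = 0` (graded antisymmetry
of `{x, x}`) and `h_R(x^{n+1}) = u h_R(x^n) + ε^n u^n y`. Commuting `u^n` past `y` then gives
`h_R(x^{n+1}) = (∑_{i ≤ n} ε^i) y u^n`: the accumulated `e`-terms carry the coefficient
`(1 + ε^n) ∑_{i < n} ε^i = n (1 + ε)`, which kills `e`. Finally `∑_{i < 2m} ε^i = m (1 + ε)`.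
-/

open Finset

theorem sgn_mul_self (z : ℤ) : sgn z * sgn z = 1 := by
  simp only [sgn, ← Units.val_mul, Int.units_mul_self, Units.val_one]

theorem sgn_eq_one_of_even {z : ℤ} (hz : Even z) : sgn z = 1 := by
  simp [sgn, Int.negOnePow_even z hz]

theorem sgn_natCast_mul (m : ℕ) (z : ℤ) : sgn (m * z) = sgn z ^ m := by
  rw [sgn, sgn, mul_comm, Int.negOnePow_def, zpow_mul, zpow_natCast, Units.val_pow_eq_pow_val]
  rfl

theorem sgn_odd_mul {a : ℤ} (ha : Odd a) (z : ℤ) : sgn (a * z) = sgn z := by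
  obtain ⟨b, rfl⟩ := ha
  simp only [sgn, add_mul, one_mul, Int.negOnePow_add, mul_assoc, Int.negOnePow_two_mul]

section SignedCommutation

variable {E : Type*} [Ring E] {ε : ℤ} {u y e : E}

theorem geom_sum_two_mul_of_mul_self_eq_one (hε : ε * ε = 1) (m : ℕ) :
    ∑ i ∈ range (2 * m), ε ^ i = m * (1 + ε) := by
  induction m with
  | zero => simp
  | succ m ih =>
    have hsq : ε ^ (2 * m) = 1 := by rw [pow_mul, sq, hε, one_pow]
    rw [Nat.mul_succ, sum_range_succ, sum_range_succ, ih, pow_succ, hsq]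
    push_cast
    ring

theorem one_add_pow_mul_geom_sum (hε : ε * ε = 1) (n : ℕ) :
    (1 + ε ^ n) * ∑ i ∈ range n, ε ^ i = n * (1 + ε) := by
  rw [← geom_sum_two_mul_of_mul_self_eq_one hε, two_mul, sum_range_add]
  simp only [pow_add, ← mul_sum]
  ring

theorem mul_eq_smul_mul_add (hε : ε * ε = 1) (he : ε • e = -e)
    (hyu : e = y * u - ε • (u * y)) : u * y = ε • (y * u) + e := by
  linear_combination (norm := module) ε • hyu - he - hε • (u * y)

theorem pow_succ_mul_of_mul_eq_smul_mul_add (huy : u * y = ε • (y * u) + e) (hue : Commute u e)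
    (j : ℕ) :
    u ^ (j + 1) * y =
      ε ^ (j + 1) • (y * u ^ (j + 1)) + (∑ i ∈ range (j + 1), ε ^ i) • (e * u ^ j) := by
  induction j with
  | zero => simpa using huy
  | succ j ih =>
    calc u ^ (j + 2) * y = u * (u ^ (j + 1) * y) := by rw [pow_succ' u (j + 1), mul_assoc]
      _ = ε ^ (j + 1) • ((u * y) * u ^ (j + 1)) +
            (∑ i ∈ range (j + 1), ε ^ i) • (e * u ^ (j + 1)) := by
        rw [ih, mul_add, mul_smul_comm, mul_smul_comm, ← mul_assoc, ← mul_assoc, hue.eq,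
          mul_assoc e, ← pow_succ']
      _ = _ := by
        rw [huy, add_mul, smul_mul_assoc, mul_assoc, ← pow_succ', sum_range_succ _ (j + 1)]
        module

theorem eq_geom_sum_smul_of_rec (hε : ε * ε = 1) (huy : u * y = ε • (y * u) + e)
    (hue : Commute u e) (he : ε • e = -e) {h : ℕ → E} (h1 : h 1 = y)
    (hrec : ∀ n, h (n + 1) = u * h n + ε ^ n • (u ^ n * y)) (n : ℕ) :
    h (n + 1) = (∑ i ∈ range (n + 1), ε ^ i) • (y * u ^ n) := by
  induction n with
  | zero => simp [h1]
  | succ n ih =>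
    set c := ∑ i ∈ range (n + 1), ε ^ i
    have hpow : ε ^ (n + 1) * ε ^ (n + 1) = 1 := by rw [← mul_pow, hε, one_pow]
    have hcancel : ((1 + ε ^ (n + 1)) * c) • (e * u ^ n) = 0 := by
      rw [one_add_pow_mul_geom_sum hε, mul_smul, ← smul_mul_assoc, add_smul, one_smul, he,
        add_neg_cancel, zero_mul, smul_zero]
    calc h (n + 2) = c • ((u * y) * u ^ n) + ε ^ (n + 1) • (u ^ (n + 1) * y) := by
          rw [hrec, ih, mul_smul_comm, mul_assoc]
      _ = (ε * c + 1) • (y * u ^ (n + 1)) + ((1 + ε ^ (n + 1)) * c) • (e * u ^ n) := by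
          rw [huy, pow_succ_mul_of_mul_eq_smul_mul_add huy hue, add_mul, smul_mul_assoc,
            mul_assoc, ← pow_succ']
          linear_combination (norm := module) hpow • (y * u ^ (n + 1))
      _ = _ := by rw [hcancel, add_zero, ← geom_sum_succ]

end SignedCommutation

theorem UEACompat.snd_pow_succ {k A B : Type} [Field k] [Ring A] [Algebra k A] [Ring B]
    [Algebra k B] {𝒜 : ℤ → Submodule k A} [SetLike.GradedMonoid 𝒜] {ℬ : ℤ → Submodule k B}
    {P : DGPoissonAlgebra k A 𝒜} {dB : B →ₗ[k] B} {f : A →ₐ[k] B} {g : A →ₗ[k] B}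
    (hfg : UEACompat k 𝒜 ℬ P dB f g) {a : A} {w : ℤ} (ha : a ∈ 𝒜 w) (n : ℕ) :
    g (a ^ (n + 1)) = (∑ i ∈ range (n + 1), sgn (w * w) ^ i) • (g a * f a ^ n) := by
  obtain ⟨-, -, -, -, hf_br, hg_mul⟩ := hfg
  have hbr : f (P.br a a) = g a * f a - sgn (w * w) • (f a * g a) := hf_br ha ha
  have hanti : sgn (w * w) • f (P.br a a) = -f (P.br a a) := by
    conv_lhs => rw [P.antisymm ha ha]
    rw [map_neg, map_zsmul, smul_neg, smul_smul, sgn_mul_self, one_smul]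
  have hcomm : Commute (f a) (f (P.br a a)) := by
    have h := P.gcomm ha (P.br_mem ha ha)
    rw [sgn_eq_one_of_even ⟨w * w, by ring⟩, one_smul] at h
    have hf := congrArg f h
    rwa [map_mul, map_mul] at hf
  refine eq_geom_sum_smul_of_rec (h := fun m => g (a ^ m)) (sgn_mul_self _)
    (mul_eq_smul_mul_add (sgn_mul_self _) hanti hbr) hcomm hanti (congrArg g (pow_one a))
    (fun m => ?_) n
  have hm : a ^ m ∈ 𝒜 (m * w) := by simpa only [nsmul_eq_mul] using SetLike.pow_mem_graded m ha
  rw [pow_succ', hg_mul ha hm, map_pow f, mul_left_comm, sgn_natCast_mul]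

theorem stmt15_general (k R E : Type) [Field k] [Ring R] [Algebra k R] [Ring E] [Algebra k E]
    (n : ℕ) (𝒜 : ℤ → Submodule k R) [GradedAlgebra 𝒜]
    (ℰ : ℤ → Submodule k E)
    (P : DGPoissonAlgebra k R 𝒜)
    (x : Fin n → R) (w : Fin n → ℤ) (hx : ∀ i, x i ∈ 𝒜 (w i))
    (DE : DGAlgebra k E ℰ) (mR : R →ₐ[k] E) (hR : R →ₗ[k] E)
    (hUEA : IsUEA k 𝒜 ℰ P DE mR hR) :
    ∀ i : Fin n,
      (∀ m : ℕ, 1 ≤ m →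
        hR (x i ^ (2 * m)) =
          ((m : k) + (m : k) * (sgn ((2 * (m : ℤ) - 1) * (w i * w i)) : k)) •
            (hR (x i) * mR (x i) ^ (2 * m - 1))) ∧
      (∀ m : ℕ,
        hR (x i ^ (2 * m + 1)) =
          ((m : k) + 1 + (m : k) * (sgn ((2 * (m : ℤ) - 1) * (w i * w i)) : k)) •
            (hR (x i) * mR (x i) ^ (2 * m))) := by
  intro i
  have hpow := hUEA.1.snd_pow_succ (hx i)
  set ε := sgn (w i * w i)
  have hε : ε * ε = 1 := sgn_mul_self _
  have hsgn (m : ℕ) : sgn ((2 * (m : ℤ) - 1) * (w i * w i)) = ε :=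
    sgn_odd_mul ⟨m - 1, by ring⟩ _
  refine ⟨fun m hm => ?_, fun m => ?_⟩
  · have h2m : 2 * m = 2 * m - 1 + 1 := by omega
    conv_lhs => rw [h2m, hpow, ← h2m, geom_sum_two_mul_of_mul_self_eq_one hε]
    rw [hsgn, ← Int.cast_smul_eq_zsmul k]
    congr 1
    push_cast
    ring
  · rw [hpow, geom_sum_succ', pow_mul, sq, hε, one_pow, geom_sum_two_mul_of_mul_self_eq_one hε,
      hsgn, ← Int.cast_smul_eq_zsmul k]
    congr 1
    push_cast
    ring

/-- In `R^e`, writing `y_i = h_R(x_i)`, for every `i` and `n ≥ 1`: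
`h_R(x_i^n) = (k + k(-1)^{(2k-1)|x_i|²}) y_i x_i^{2k-1}` if `n = 2k`, and
`h_R(x_i^n) = (k + 1 + k(-1)^{(2k-1)|x_i|²}) y_i x_i^{2k}` if `n = 2k+1`. -/
theorem stmt15 (k R E : Type) [Field k] [Ring R] [Algebra k R] [Ring E] [Algebra k E]
    (n : ℕ) (𝒜 : ℤ → Submodule k R) [GradedAlgebra 𝒜]
    (ℰ : ℤ → Submodule k E) [GradedAlgebra ℰ]
    (P : DGPoissonAlgebra k R 𝒜)
    (x : Fin n → R) (w : Fin n → ℤ) (hx : ∀ i, x i ∈ 𝒜 (w i))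
    (hgen : Algebra.adjoin k (Set.range x) = ⊤)
    (DE : DGAlgebra k E ℰ) (mR : R →ₐ[k] E) (hR : R →ₗ[k] E)
    (hUEA : IsUEA k 𝒜 ℰ P DE mR hR) :
    ∀ i : Fin n,
      (∀ m : ℕ, 1 ≤ m →
        hR (x i ^ (2 * m)) =
          ((m : k) + (m : k) * (sgn ((2 * (m : ℤ) - 1) * (w i * w i)) : k)) •
            (hR (x i) * mR (x i) ^ (2 * m - 1))) ∧
      (∀ m : ℕ,
        hR (x i ^ (2 * m + 1)) =
          ((m : k) + 1 + (m : k) * (sgn ((2 * (m : ℤ) - 1) * (w i * w i)) : k)) •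
            (hR (x i) * mR (x i) ^ (2 * m))) :=
  stmt15_general k R E n 𝒜 ℰ P x w hx DE mR hR hUEA
end
end
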